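/- Let f : ℝ → ℝ be continuously differentiable with compact support. Then for every x ∈ ℝ, the derivative of the logarithmic potential L(x) = ∫_ℝ ln|x − y| · f(y) dy satisfies L'(x) = ∫_ℝ ln|x − y| · f'(y) dy; i.e. the derivative may be transferred from the convolution onto f under the logarithmic kernel. -/

import Mathlib

open MeasureTheory Set
open scoped Convolution

/-! The logarithmic potential is the convolution `log|·| ⋆ f`. The kernel `log|·|` is locally
integrable (its singularity at `0` is integrable), so the derivative of the convolution falls on
the compactly supported `C¹` factor `f`. -/

theorem locallyIntegrable_of_forall_intervalIntegrable {E : Type*} [NormedAddCommGroup E]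
    {μ : Measure ℝ} [NullSingletonClass μ] {f : ℝ → E} (hf : ∀ a b, IntervalIntegrable f μ a b) :
    LocallyIntegrable f μ := by
  refine (locallyIntegrable_iff).2 fun K hK => ?_
  obtain ⟨a, ha⟩ := hK.bddBelow
  obtain ⟨b, hb⟩ := hK.bddAbove
  have hKab : K ⊆ Icc a (max a b) := fun x hx => ⟨ha hx, (hb hx).trans (le_max_right a b)⟩
  exact ((intervalIntegrable_iff_integrableOn_Icc_of_le (le_max_left a b)).1 (hf _ _)).mono_set
    hKab

theorem locallyIntegrable_log_abs : LocallyIntegrable (fun t : ℝ => Real.log |t|) volume := by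
  simp_rw [Real.log_abs]
  exact locallyIntegrable_of_forall_intervalIntegrable fun _ _ =>
    intervalIntegral.intervalIntegrable_log'

theorem HasCompactSupport.hasDerivAt_integral_comp_sub_mul {k f : ℝ → ℝ}
    (hk : LocallyIntegrable k volume) (hfc : HasCompactSupport f) (hf : ContDiff ℝ 1 f) (x : ℝ) :
    HasDerivAt (fun z => ∫ y, k (z - y) * f y) (∫ y, k (x - y) * deriv f y) x := by
  have hconv : (fun z => ∫ y, k (z - y) * f y) = k ⋆[ContinuousLinearMap.mul ℝ ℝ] f :=
    funext fun _ => convolution_mul_swap.symm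
  rw [hconv, ← convolution_mul_swap]
  exact hfc.hasDerivAt_convolution_right _ hk hf x

/-- **Transferring the derivative under the logarithmic kernel (eq. (7), second part).**
For `f` continuously differentiable with compact support, the derivative of the logarithmic
potential `L(x) = ∫_ℝ ln|x − y| f(y) dy` satisfies `L'(x) = ∫_ℝ ln|x − y| f'(y) dy`. -/
theorem deriv_logPotential_eq_logPotential_deriv
    (f : ℝ → ℝ) (hf : ContDiff ℝ 1 f) (hfc : HasCompactSupport f) :
    ∀ x : ℝ, deriv (fun x : ℝ => ∫ y : ℝ, Real.log |x - y| * f y) x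
      = ∫ y : ℝ, Real.log |x - y| * deriv f y := fun x =>
  (hfc.hasDerivAt_integral_comp_sub_mul locallyIntegrable_log_abs hf x).deriv
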